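/- arXiv:2203.16157 — 2 statements merged into one kernel-verified Lean document; each statement's English description precedes it below -/
import Mathlib

section
/- The linear program defining H_max^ε(X) is optimized by a vector λ* that equals 0 on a maximal set S of lowest-probability symbols with total mass at most ε, takes a value in (0,1) on the next symbol in the probability ordering, and equals 1 on all remaining symbols. -/
/-!
The optimizer fills the budget `1 - ε` greedily from the most probable symbols: `λ*` is the
threshold vector that is `0` below `s`, `1` above `s`, and takes at `s` the fractional value
making the constraint tight. For any feasible `μ`, the weighted excess `∑ P (μ - λ*) ≥ 0`
is bounded above by `P s · ∑ (μ - λ*)`, because `μ - λ*` is `≥ 0` where `P ≤ P s` and `≤ 0`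
where `P ≥ P s`; hence `∑ λ* ≤ ∑ μ`.
-/

open Finset

section Threshold

variable {ι : Type*} [LinearOrder ι]

theorem Finset.sum_univ_eq_sum_lt_add_add_sum_gt [Fintype ι] {M : Type*} [AddCommMonoid M]
    (f : ι → M) (s : ι) :
    ∑ i, f i = ∑ i ∈ univ.filter (· < s), f i + f s + ∑ i ∈ univ.filter (s < ·), f i := by
  have hge : univ.filter (fun i => ¬ i < s) = insert s (univ.filter (s < ·)) := by
    ext i
    simp [le_iff_eq_or_lt, eq_comm]
  rw [← sum_filter_add_sum_filter_not univ (· < s), hge,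
    sum_insert (by simp), add_assoc]

def thresholdVec (s : ι) (t : ℝ) (i : ι) : ℝ :=
  if i < s then 0 else if i = s then t else 1

theorem thresholdVec_of_lt {s i : ι} (t : ℝ) (h : i < s) : thresholdVec s t i = 0 := by
  simp [thresholdVec, h]

@[simp]
theorem thresholdVec_self (s : ι) (t : ℝ) : thresholdVec s t s = t := by
  simp [thresholdVec]

theorem thresholdVec_of_gt {s i : ι} (t : ℝ) (h : s < i) : thresholdVec s t i = 1 := by
  simp [thresholdVec, not_lt.mpr h.le, h.ne']

theorem thresholdVec_mem_Icc {s : ι} {t : ℝ} (ht : t ∈ Set.Icc 0 1) (i : ι) :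
    thresholdVec s t i ∈ Set.Icc 0 1 := by
  rcases lt_trichotomy i s with h | rfl | h
  · simp [thresholdVec_of_lt t h]
  · simpa using ht
  · simp [thresholdVec_of_gt t h]

theorem sum_mul_thresholdVec [Fintype ι] (P : ι → ℝ) (s : ι) (t : ℝ) :
    ∑ i, P i * thresholdVec s t i = P s * t + ∑ i ∈ univ.filter (s < ·), P i := by
  rw [sum_univ_eq_sum_lt_add_add_sum_gt, thresholdVec_self,
    sum_eq_zero fun i hi => by rw [thresholdVec_of_lt t (mem_filter.mp hi).2, mul_zero],
    sum_congr rfl fun i hi => by rw [thresholdVec_of_gt t (mem_filter.mp hi).2, mul_one],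
    zero_add]

theorem sum_thresholdVec_le_of_weighted_le [Fintype ι] {P μ : ι → ℝ} (hP : Monotone P) {s : ι}
    (hPs : 0 < P s) {t : ℝ} (hμ : ∀ i, μ i ∈ Set.Icc 0 1)
    (hle : ∑ i, P i * thresholdVec s t i ≤ ∑ i, P i * μ i) :
    ∑ i, thresholdVec s t i ≤ ∑ i, μ i := by
  have hpointwise (i : ι) :
      P i * (μ i - thresholdVec s t i) ≤ P s * (μ i - thresholdVec s t i) := by
    rcases lt_trichotomy i s with h | rfl | h
    · rw [thresholdVec_of_lt t h, sub_zero]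
      exact mul_le_mul_of_nonneg_right (hP h.le) (hμ i).1
    · rfl
    · rw [thresholdVec_of_gt t h]
      exact mul_le_mul_of_nonpos_right (hP h.le) (sub_nonpos.mpr (hμ i).2)
  have hexcess : 0 ≤ P s * ∑ i, (μ i - thresholdVec s t i) := calc
    0 ≤ ∑ i, P i * (μ i - thresholdVec s t i) := by
      simp only [mul_sub, sum_sub_distrib]
      exact sub_nonneg.mpr hle
    _ ≤ ∑ i, P s * (μ i - thresholdVec s t i) := sum_le_sum fun i _ => hpointwise i
    _ = P s * ∑ i, (μ i - thresholdVec s t i) := (mul_sum _ _ _).symm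
  rw [sum_sub_distrib] at hexcess
  exact sub_nonneg.mp (nonneg_of_mul_nonneg_right hexcess hPs)

end Threshold

theorem Hmax_LP_optimizer_structure_general
    {m : ℕ} (P : Fin m → ℝ) (hP1 : ∑ i, P i = 1)
    (hmono : Monotone P)      -- symbols ordered by nondecreasing probability
    (ε : ℝ)
    (s : Fin m)               -- the first symbol outside the discarded initial segment
    (hmass : ∑ i ∈ Finset.univ.filter (fun i => i < s), P i < ε)
    (hmaximal : ε < (∑ i ∈ Finset.univ.filter (fun i => i < s), P i) + P s) :
    ∃ lam : Fin m → ℝ,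
      -- feasibility
      (∀ i, 0 ≤ lam i ∧ lam i ≤ 1) ∧ 1 - ε ≤ ∑ i, P i * lam i ∧
      -- optimality among all feasible vectors
      (∀ mu : Fin m → ℝ, (∀ i, 0 ≤ mu i ∧ mu i ≤ 1) → 1 - ε ≤ ∑ i, P i * mu i →
        ∑ i, lam i ≤ ∑ i, mu i) ∧
      -- structure: 0 below `s`, in (0,1) at `s`, and 1 above `s`
      (∀ i, i < s → lam i = 0) ∧ (0 < lam s ∧ lam s < 1) ∧ (∀ i, s < i → lam i = 1) := by
  set M := ∑ i ∈ univ.filter (· < s), P i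
  have hPs : 0 < P s := by linarith
  set t := (M + P s - ε) / P s
  have ht : 0 < t ∧ t < 1 := ⟨div_pos (by linarith) hPs, (div_lt_one hPs).mpr (by linarith)⟩
  have hweighted : ∑ i, P i * thresholdVec s t i = 1 - ε := by
    have htotal := sum_univ_eq_sum_lt_add_add_sum_gt P s
    rw [sum_mul_thresholdVec, mul_div_cancel₀ _ hPs.ne']
    linarith
  refine ⟨thresholdVec s t, fun i => thresholdVec_mem_Icc ⟨ht.1.le, ht.2.le⟩ i,
    hweighted.ge, fun μ hμ hfeas => ?_, fun _ => thresholdVec_of_lt t,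
    by simpa using ht, fun _ => thresholdVec_of_gt t⟩
  exact sum_thresholdVec_le_of_weighted_le hmono hPs hμ (hweighted.trans_le hfeas)

/-- The linear program defining `H_max^ε` is optimized by a vector `lam*`
that vanishes on the maximal initial segment `S = {i | i < s}` of lowest-probability
symbols of mass at most `ε`, takes a value in `(0,1)` on the next symbol `s`, and
equals `1` on all remaining symbols. -/
theorem Hmax_LP_optimizer_structure
    {m : ℕ} (P : Fin m → ℝ) (hP0 : ∀ i, 0 ≤ P i) (hP1 : ∑ i, P i = 1)
    (hmono : Monotone P)      -- symbols ordered by nondecreasing probability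
    (ε : ℝ) (hε : 0 < ε)
    (s : Fin m)               -- the first symbol outside the discarded initial segment
    (hmass : ∑ i ∈ Finset.univ.filter (fun i => i < s), P i < ε)
    (hmaximal : ε < (∑ i ∈ Finset.univ.filter (fun i => i < s), P i) + P s) :
    ∃ lam : Fin m → ℝ,
      -- feasibility
      (∀ i, 0 ≤ lam i ∧ lam i ≤ 1) ∧ 1 - ε ≤ ∑ i, P i * lam i ∧
      -- optimality among all feasible vectors
      (∀ mu : Fin m → ℝ, (∀ i, 0 ≤ mu i ∧ mu i ≤ 1) → 1 - ε ≤ ∑ i, P i * mu i →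
        ∑ i, lam i ≤ ∑ i, mu i) ∧
      -- structure: 0 below `s`, in (0,1) at `s`, and 1 above `s`
      (∀ i, i < s → lam i = 0) ∧ (0 < lam s ∧ lam s < 1) ∧ (∀ i, s < i → lam i = 1) :=
  Hmax_LP_optimizer_structure_general P hP1 hmono ε s hmass hmaximal
end

section
/- Hash collision bound in the CDC-QSI analysis: for a cq state ρ^{XB} = ∑_x P_X(x)|x⟩⟨x|⊗ρ_x, a 2-universal hash family F from X to [2^R], per-symbol tests 0 ≤ Π_x ≤ I forming the optimizer Π_opt = ∑_x |x⟩⟨x|⊗Π_x of I_H^ε(X:B), and the truncated subdistribution P'_X, the expected total collision error satisfies E_f [∑_x P'_X(x) ∑_{x'≠x, x'∈supp(P')} 1{f(x')=f(x)} Tr(Π_{x'} ρ_x)] ≤ 2^{−R + H_max^ε(X) − I_H^ε(X:B)_ρ}. -/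
noncomputable section
open scoped BigOperators ComplexOrder

/-- The ε-smooth max entropy, via its linear program. -/
def Hmax {X : Type*} [Fintype X] (P : X → ℝ) (ε : ℝ) : ℝ :=
  Real.logb 2 (sInf {s : ℝ | ∃ lam : X → ℝ,
    (∀ x, 0 ≤ lam x ∧ lam x ≤ 1) ∧ 1 - ε ≤ ∑ x, P x * lam x ∧ s = ∑ x, lam x})

/-- The cq state `ρ^{XB} = ∑ₓ P x |x⟩⟨x| ⊗ ρ x`. -/
def cqState {X : Type*} [Fintype X] [DecidableEq X] {d : ℕ}
    (P : X → ℝ) (ρ : X → Matrix (Fin d) (Fin d) ℂ) :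
    Matrix (X × Fin d) (X × Fin d) ℂ :=
  fun p q => if p.1 = q.1 then (P p.1 : ℂ) * ρ p.1 p.2 q.2 else 0

/-- The product of marginals `ρ^X ⊗ ρ^B` of the cq state. -/
def cqProdState {X : Type*} [Fintype X] [DecidableEq X] {d : ℕ}
    (P : X → ℝ) (ρ : X → Matrix (Fin d) (Fin d) ℂ) :
    Matrix (X × Fin d) (X × Fin d) ℂ :=
  fun p q => if p.1 = q.1 then (P p.1 : ℂ) * (∑ x, (P x : ℂ) * ρ x p.2 q.2) else 0

/-- The block-diagonal operator `∑ₓ |x⟩⟨x| ⊗ T x`. -/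
def blockDiag {X : Type*} [Fintype X] [DecidableEq X] {d : ℕ}
    (T : X → Matrix (Fin d) (Fin d) ℂ) : Matrix (X × Fin d) (X × Fin d) ℂ :=
  fun p q => if p.1 = q.1 then T p.1 p.2 q.2 else 0

lemma diag_re_nonneg' {n : Type*} [Fintype n] [DecidableEq n] {M : Matrix n n ℂ}
    (hM : M.PosSemidef) (i : n) : 0 ≤ (M i i).re := by
  have := hM.re_dotProduct_nonneg (Pi.single i 1)
  simpa [dotProduct, Matrix.mulVec, Pi.single_apply, Finset.sum_ite_eq,
    Finset.sum_ite_eq', mul_comm] using this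

lemma trace_mul_psd_nonneg' {n : Type*} [Fintype n] [DecidableEq n]
    {A B : Matrix n n ℂ} (hA : A.PosSemidef) (hB : B.PosSemidef) :
    0 ≤ ((A * B).trace).re := by
  open scoped MatrixOrder in
  obtain ⟨C, hC⟩ := CStarAlgebra.nonneg_iff_eq_star_mul_self.mp hB.nonneg
  rw [Matrix.star_eq_conjTranspose] at hC
  subst hC
  have h1 : (A * (C.conjTranspose * C)).trace = (C * A * C.conjTranspose).trace := by
    rw [← Matrix.trace_mul_cycle, Matrix.mul_assoc]
  rw [h1, Matrix.trace]
  have hpsd := hA.mul_mul_conjTranspose_same C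
  simpa [Matrix.diag] using
    Finset.sum_nonneg (fun i _ => diag_re_nonneg' hpsd i)

lemma cqProd_trace_eq {X : Type*} [Fintype X] [DecidableEq X] {d : ℕ}
    (P : X → ℝ) (ρ T : X → Matrix (Fin d) (Fin d) ℂ) :
    (((blockDiag T) * cqProdState P ρ).trace).re
      = ∑ x, P x * ∑ y, P y * ((T x * ρ y).trace).re := by
  have h : ((blockDiag T) * cqProdState P ρ).trace
      = ∑ x, (P x : ℂ) * ∑ y, (P y : ℂ) * (T x * ρ y).trace := by
    simp only [Matrix.trace, Matrix.diag, Matrix.mul_apply, blockDiag, cqProdState,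
      Fintype.sum_prod_type, ite_mul, zero_mul, mul_ite, mul_zero,
      Finset.sum_ite_eq, Finset.sum_ite_eq', Finset.mem_univ, if_true]
    refine Finset.sum_congr rfl fun x _ => ?_
    rw [Finset.sum_comm]
    rw [Finset.sum_eq_single_of_mem x (Finset.mem_univ x) (fun y _ hy => by simp [hy])]
    simp only [if_true, Finset.mul_sum]
    refine (Finset.sum_congr rfl (fun b _ => Finset.sum_comm)).trans ?_
    rw [Finset.sum_comm]
    refine Finset.sum_congr rfl fun y _ => ?_
    refine Finset.sum_congr rfl fun b _ => ?_
    refine Finset.sum_congr rfl fun j _ => ?_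
    ring
  rw [h, Complex.re_sum]
  refine Finset.sum_congr rfl fun x _ => ?_
  rw [Complex.re_ofReal_mul, Complex.re_sum]
  congr 1
  refine Finset.sum_congr rfl fun y _ => ?_
  rw [Complex.re_ofReal_mul]

/-- hash collision bound in the CDC-QSI analysis: for a cq state, a
2-universal hash family into `[2^R]`, per-symbol tests `0 ≤ T x ≤ I` forming the
block-diagonal optimizer of `I_H^ε(X:B)` (i.e. `Tr[Π_opt ρ^{XB}] ≥ 1−ε` and
`Tr[Π_opt ρ^X⊗ρ^B] = 2^{−I_H}`), and the truncated subdistribution `P'` with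
`1/P' ≤ 2^{H_max^ε}` on its support, the expected total collision error is at most
`2^{−R + H_max^ε(X) − I_H^ε(X:B)}`. -/
theorem hash_collision_bound
    {X : Type*} [Fintype X] [DecidableEq X] {d : ℕ}
    (P : X → ℝ) (hP0 : ∀ x, 0 ≤ P x) (hP1 : (∑ x, P x) = 1)
    (ρ : X → Matrix (Fin d) (Fin d) ℂ)
    (hρ : ∀ x, (ρ x).PosSemidef ∧ (ρ x).trace = 1)
    (ε : ℝ) (hε0 : 0 < ε) (hε1 : ε < 1)
    (IHval : ℝ)
    (T : X → Matrix (Fin d) (Fin d) ℂ)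
    (hT : ∀ x, (T x).PosSemidef ∧ (1 - T x).PosSemidef)
    (hopt1 : 1 - ε ≤ (((blockDiag T) * cqState P ρ).trace).re)
    (hopt2 : (((blockDiag T) * cqProdState P ρ).trace).re = (2 : ℝ) ^ (-IHval))
    (P' : X → ℝ)
    (hsub : ∀ x, P' x = 0 ∨ P' x = P x)
    (hsupp : ∀ x, 0 < P' x → (2 : ℝ) ^ (-(Hmax P ε)) ≤ P' x)
    (R N : ℕ) (hN : 0 < N)
    (f : Fin N → X → Fin (2 ^ R))
    (huniv : ∀ x x', x ≠ x' →
      ((Finset.univ.filter (fun j : Fin N => f j x = f j x')).card : ℝ) / (N : ℝ)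
        ≤ 1 / ((2 : ℝ) ^ R)) :
    (1 / (N : ℝ)) * (∑ j, ∑ x, P' x *
        ∑ x' ∈ Finset.univ.filter (fun x' => x' ≠ x ∧ 0 < P' x' ∧ f j x' = f j x),
          ((T x' * ρ x).trace).re)
      ≤ (2 : ℝ) ^ (-(R : ℝ) + Hmax P ε - IHval) := by
  classical
  set H := Hmax P ε with hH
  have tnn : ∀ a b : X, 0 ≤ ((T b * ρ a).trace).re :=
    fun a b => trace_mul_psd_nonneg' (hT b).1 (hρ a).1
  have hP'0 : ∀ x, 0 ≤ P' x := fun x => by rcases hsub x with h | h <;> simp [h, hP0 x]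
  have hP'le : ∀ x, P' x ≤ P x := fun x => by
    rcases hsub x with h | h <;> simp [h, hP0 x]
  have hNpos : (0:ℝ) < (N:ℝ) := by exact_mod_cast hN
  have h2R : (0:ℝ) < (2:ℝ)^R := by positivity
  have h2H : (0:ℝ) < (2:ℝ)^H := Real.rpow_pos_of_pos (by norm_num) H
  -- Step 1: reorganize the sum
  have hswap : (∑ j, ∑ x, P' x *
        ∑ x' ∈ Finset.univ.filter (fun x' => x' ≠ x ∧ 0 < P' x' ∧ f j x' = f j x),
          ((T x' * ρ x).trace).re)
      = ∑ x, P' x * ∑ x' : X, ∑ j : Fin N,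
          (if x' ≠ x ∧ 0 < P' x' ∧ f j x' = f j x then ((T x' * ρ x).trace).re else 0) := by
    rw [Finset.sum_comm]
    refine Finset.sum_congr rfl fun x _ => ?_
    rw [← Finset.mul_sum]
    congr 1
    refine (Finset.sum_congr rfl (fun j _ => Finset.sum_filter _ _)).trans ?_
    exact Finset.sum_comm
  -- Step 2: per-pair bound
  have hpair : ∀ x x' : X,
      (∑ j : Fin N, if x' ≠ x ∧ 0 < P' x' ∧ f j x' = f j x
          then ((T x' * ρ x).trace).re else 0)
      ≤ (N : ℝ) * ((1 / (2:ℝ)^R) * ((2:ℝ)^H * (P x' * ((T x' * ρ x).trace).re))) := by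
    intro x x'
    by_cases hc : x' ≠ x ∧ 0 < P' x'
    · have hcond : ∀ j, (x' ≠ x ∧ 0 < P' x' ∧ f j x' = f j x) ↔ f j x' = f j x :=
        fun j => ⟨fun h => h.2.2, fun h => ⟨hc.1, hc.2, h⟩⟩
      have hsum : (∑ j : Fin N, if x' ≠ x ∧ 0 < P' x' ∧ f j x' = f j x
            then ((T x' * ρ x).trace).re else 0)
          = ((Finset.univ.filter (fun j : Fin N => f j x' = f j x)).card : ℝ)
              * ((T x' * ρ x).trace).re := by
        simp only [hcond]
        rw [← Finset.sum_filter, Finset.sum_const, nsmul_eq_mul]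
      rw [hsum]
      have hcard : ((Finset.univ.filter (fun j : Fin N => f j x' = f j x)).card : ℝ)
          ≤ (1 / (2:ℝ)^R) * (N:ℝ) := by
        have h := huniv x' x hc.1
        rw [div_le_iff₀ hNpos] at h
        exact h
      have hPx' : P' x' = P x' := by
        rcases hsub x' with h0 | h0
        · exact absurd hc.2 (by rw [h0]; exact lt_irrefl 0)
        · exact h0
      have h1le : (1:ℝ) ≤ (2:ℝ)^H * P x' := by
        have hs := hsupp x' hc.2
        rw [hPx'] at hs
        have hprod : (2:ℝ)^H * (2:ℝ)^(-H) = 1 := by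
          rw [← Real.rpow_add (by norm_num)]; simp
        calc (1:ℝ) = (2:ℝ)^H * (2:ℝ)^(-H) := hprod.symm
          _ ≤ (2:ℝ)^H * P x' := mul_le_mul_of_nonneg_left hs (le_of_lt h2H)
      have gnn := tnn x x'
      calc ((Finset.univ.filter (fun j : Fin N => f j x' = f j x)).card : ℝ)
            * ((T x' * ρ x).trace).re
          ≤ ((1 / (2:ℝ)^R) * (N:ℝ)) * ((T x' * ρ x).trace).re :=
            mul_le_mul_of_nonneg_right hcard gnn
        _ ≤ ((1 / (2:ℝ)^R) * (N:ℝ)) * (((2:ℝ)^H * P x') * ((T x' * ρ x).trace).re) := by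
            refine mul_le_mul_of_nonneg_left ?_ (by positivity)
            exact le_mul_of_one_le_left gnn h1le
        _ = (N : ℝ) * ((1 / (2:ℝ)^R) * ((2:ℝ)^H * (P x' * ((T x' * ρ x).trace).re))) := by
            ring
    · have hz : ∀ j : Fin N, (if x' ≠ x ∧ 0 < P' x' ∧ f j x' = f j x
            then ((T x' * ρ x).trace).re else 0) = 0 := by
        intro j
        rw [if_neg]
        rintro ⟨h1, h2, _⟩
        exact hc ⟨h1, h2⟩
      rw [Finset.sum_congr rfl (fun j _ => hz j), Finset.sum_const, smul_zero]
      have : 0 ≤ P x' * ((T x' * ρ x).trace).re := mul_nonneg (hP0 x') (tnn x x')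
      positivity
  -- Step 3: combine
  have inner_nonneg : ∀ x, 0 ≤ ∑ x', P x' * ((T x' * ρ x).trace).re :=
    fun x => Finset.sum_nonneg fun x' _ => mul_nonneg (hP0 x') (tnn x x')
  have hsymm : (∑ x, P x * ∑ x', P x' * ((T x' * ρ x).trace).re)
      = ∑ x, P x * ∑ y, P y * ((T x * ρ y).trace).re := by
    simp only [Finset.mul_sum]
    rw [Finset.sum_comm]
    refine Finset.sum_congr rfl fun a _ => Finset.sum_congr rfl fun b _ => ?_
    ring
  have hNne : (N:ℝ) ≠ 0 := ne_of_gt hNpos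
  calc (1 / (N : ℝ)) * (∑ j, ∑ x, P' x *
        ∑ x' ∈ Finset.univ.filter (fun x' => x' ≠ x ∧ 0 < P' x' ∧ f j x' = f j x),
          ((T x' * ρ x).trace).re)
      = (1 / (N : ℝ)) * ∑ x, P' x * ∑ x' : X, ∑ j : Fin N,
          (if x' ≠ x ∧ 0 < P' x' ∧ f j x' = f j x then ((T x' * ρ x).trace).re else 0) := by
        rw [hswap]
    _ ≤ (1 / (N : ℝ)) * ∑ x, P' x * ∑ x' : X,
          (N : ℝ) * ((1 / (2:ℝ)^R) * ((2:ℝ)^H * (P x' * ((T x' * ρ x).trace).re))) := by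
        refine mul_le_mul_of_nonneg_left ?_ (by positivity)
        refine Finset.sum_le_sum fun x _ => ?_
        exact mul_le_mul_of_nonneg_left (Finset.sum_le_sum fun x' _ => hpair x x') (hP'0 x)
    _ = ∑ x, P' x * ((1 / (2:ℝ)^R) * ((2:ℝ)^H * ∑ x', P x' * ((T x' * ρ x).trace).re)) := by
        rw [Finset.mul_sum]
        refine Finset.sum_congr rfl fun x _ => ?_
        rw [← Finset.mul_sum, ← Finset.mul_sum, ← Finset.mul_sum]
        field_simp
    _ ≤ ∑ x, P x * ((1 / (2:ℝ)^R) * ((2:ℝ)^H * ∑ x', P x' * ((T x' * ρ x).trace).re)) := by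
        refine Finset.sum_le_sum fun x _ => ?_
        refine mul_le_mul_of_nonneg_right (hP'le x) ?_
        have := inner_nonneg x
        positivity
    _ = (1 / (2:ℝ)^R) * ((2:ℝ)^H * ∑ x, P x * ∑ x', P x' * ((T x' * ρ x).trace).re) := by
        rw [Finset.mul_sum, Finset.mul_sum]
        refine Finset.sum_congr rfl fun x _ => ?_
        ring
    _ = (1 / (2:ℝ)^R) * ((2:ℝ)^H * (2:ℝ)^(-IHval)) := by
        rw [hsymm, ← cqProd_trace_eq P ρ T, hopt2]
    _ = (2 : ℝ) ^ (-(R : ℝ) + H - IHval) := by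
        have hR : (1 / (2:ℝ)^R) = (2:ℝ)^(-(R:ℝ)) := by
          rw [Real.rpow_neg (by norm_num), Real.rpow_natCast, one_div]
        rw [hR, ← Real.rpow_add (by norm_num), ← Real.rpow_add (by norm_num)]
        congr 1
        ring
end
end
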